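/- In a cartesian differential category, D(f^{(n)})(x₀,…,xₙ, y₀,…,yₙ) = f^{(n+1)}(x₀,…,xₙ, y₀) + Σ_{i=1}^{n} f^{(n)}(x₀,…,x_{i-1}, y_i, x_{i+1},…,xₙ) for any maps x₀,…,xₙ,y₀,…,yₙ : X → A. -/

import Mathlib

universe u

open Finset

/-- Unordered partitions of `Fin n` into nonempty parts, as a `Finset`. -/
def partitions (n : ℕ) : Finset (Finset (Finset (Fin n))) :=
  Finset.univ.filter fun P =>
    (∅ ∉ P) ∧ ∀ i : Fin n, (P.filter fun s => i ∈ s).card = 1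

/-- Partial injections from `Fin m` to `Fin n` (partial isomorphisms `[m] ≃ [n]`). -/
def partialInjs (m n : ℕ) : Finset (Fin m → Option (Fin n)) :=
  Finset.univ.filter fun θ =>
    ∀ i j : Fin m, ∀ a : Fin n, θ i = some a → θ j = some a → i = j

/-- The arrangement (Notation 5) associated to a partial isomorphism `θ : [m] ≃ [n]`:
the tail of the list `x_{θ₍₁₎θ₍₂₎}`, i.e. everything after the leading entry `(0,0)`:
matched pairs `(i, θ i)`, then unmatched rows `(i, 0)`, then unmatched columns `(0, j)`. -/
def arrangeTail (m n : ℕ) (θ : Fin m → Option (Fin n)) :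
    List (Fin (m + 1) × Fin (n + 1)) :=
  ((List.finRange m).filterMap fun i => (θ i).map fun j => (i.succ, j.succ))
    ++ ((List.finRange m).filterMap fun i =>
          if θ i = none then some (i.succ, (0 : Fin (n + 1))) else none)
    ++ ((List.finRange n).filterMap fun j =>
          if ∀ i, θ i ≠ some j then some ((0 : Fin (m + 1)), j.succ) else none)

variable (k : Type u) [CommSemiring k]

/-- The data of a cartesian left-`k`-linear category. -/
structure CDCData where
  Obj : Type u
  Hom : Obj → Obj → Type u
  homAdd : ∀ A B, AddCommMonoid (Hom A B)
  homMod : ∀ A B, @Module k (Hom A B) inferInstance (homAdd A B)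
  id : ∀ A, Hom A A
  comp : ∀ {A B C}, Hom B C → Hom A B → Hom A C
  term : Obj
  toTerm : ∀ A, Hom A term
  prod : Obj → Obj → Obj
  fst : ∀ {A B}, Hom (prod A B) A
  snd : ∀ {A B}, Hom (prod A B) B
  pair : ∀ {Z A B}, Hom Z A → Hom Z B → Hom Z (prod A B)

variable {k}

instance (C : CDCData k) (A B : C.Obj) : AddCommMonoid (C.Hom A B) := C.homAdd A B
instance (C : CDCData k) (A B : C.Obj) : Module k (C.Hom A B) := C.homMod A B

namespace CDCData

/-- `dom A n` is the `(n+1)`-fold product `A × Aⁿ`, nested on the left. -/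
def dom (C : CDCData k) (A : C.Obj) : ℕ → C.Obj
  | 0 => A
  | n + 1 => C.prod (dom C A n) A

/-- Tupling of `n+1` generalized elements of `A` into `A × Aⁿ`. -/
def tupleD (C : CDCData k) {Z A : C.Obj} :
    (n : ℕ) → (Fin (n + 1) → C.Hom Z A) → C.Hom Z (C.dom A n)
  | 0, x => x 0
  | n + 1, x => C.pair (tupleD C n fun i => x i.castSucc) (x (Fin.last (n + 1)))

/-- Tupling of a head together with a list; the head of the list lands in the
*last* slot. -/
def tupList (C : CDCData k) {Z A : C.Obj} (x0 : C.Hom Z A) :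
    (L : List (C.Hom Z A)) → C.Hom Z (C.dom A L.length)
  | [] => x0
  | a :: L => C.pair (tupList C x0 L) a

/-- Zero-padding `v` into the first slot of `A × Aⁿ`. -/
def zpad (C : CDCData k) {Z A : C.Obj} : (n : ℕ) → C.Hom Z A → C.Hom Z (C.dom A n)
  | 0, v => v
  | n + 1, v => C.pair (zpad C n v) 0

/-- The `i`-th projection `A × Aⁿ → A`. -/
def projD (C : CDCData k) {A : C.Obj} : (n : ℕ) → Fin (n + 1) → C.Hom (C.dom A n) A
  | 0, _ => C.id A
  | n + 1, i => Fin.lastCases C.snd (fun j => C.comp (projD C n j) C.fst) i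

/-- The `2ⁿ`-fold product of `A`. -/
def twoPow (C : CDCData k) (A : C.Obj) : ℕ → C.Obj
  | 0 => A
  | n + 1 => C.prod (twoPow C A n) (twoPow C A n)

/-- Tupling of a family indexed by `Fin n → Bool` (characteristic functions of
subsets of `[n]`) into `A^(2ⁿ)`; the last bit is the outermost product factor. -/
def cube (C : CDCData k) {Z A : C.Obj} :
    (n : ℕ) → ((Fin n → Bool) → C.Hom Z A) → C.Hom Z (C.twoPow A n)
  | 0, x => x fun i => i.elim0
  | n + 1, x =>
      C.pair (cube C n fun b => x (Fin.snoc b false))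
        (cube C n fun b => x (Fin.snoc b true))

/-- The subset of `Fin n` with characteristic function `b`. -/
def bset {n : ℕ} (b : Fin n → Bool) : Finset (Fin n) :=
  Finset.univ.filter fun i => b i = true

end CDCData

variable (k)

/-- A (`k`-linear) cartesian differential category, presented via generalized
elements. -/
structure CDC extends CDCData k where
  id_comp : ∀ {A B} (f : Hom A B), comp (id B) f = f
  comp_id : ∀ {A B} (f : Hom A B), comp f (id A) = f
  comp_assoc : ∀ {A B C D} (h : Hom C D) (g : Hom B C) (f : Hom A B),
    comp (comp h g) f = comp h (comp g f)
  -- left `k`-linearity: precomposition is `k`-linear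
  add_comp : ∀ {A B C} (g h : Hom B C) (f : Hom A B),
    comp (g + h) f = comp g f + comp h f
  smul_comp : ∀ {A B C} (r : k) (g : Hom B C) (f : Hom A B),
    comp (r • g) f = r • comp g f
  zero_comp : ∀ {A B C} (f : Hom A B), comp (0 : Hom B C) f = (0 : Hom A C)
  -- cartesian structure
  toTerm_unique : ∀ {A} (f : Hom A term), f = toTerm A
  fst_pair : ∀ {Z A B} (f : Hom Z A) (g : Hom Z B), comp fst (pair f g) = f
  snd_pair : ∀ {Z A B} (f : Hom Z A) (g : Hom Z B), comp snd (pair f g) = g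
  pair_unique : ∀ {Z A B} (h : Hom Z (prod A B)), pair (comp fst h) (comp snd h) = h
  -- the projections are `k`-linear
  fst_comp_add : ∀ {Z A B} (x y : Hom Z (prod A B)),
    comp fst (x + y) = comp fst x + comp fst y
  fst_comp_smul : ∀ {Z A B} (r : k) (x : Hom Z (prod A B)),
    comp fst (r • x) = r • comp fst x
  snd_comp_add : ∀ {Z A B} (x y : Hom Z (prod A B)),
    comp snd (x + y) = comp snd x + comp snd y
  snd_comp_smul : ∀ {Z A B} (r : k) (x : Hom Z (prod A B)),
    comp snd (r • x) = r • comp snd x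
  -- the differential operator
  D : ∀ {A B}, Hom A B → Hom (prod A A) B
  -- (i) D is k-linear
  D_add : ∀ {A B} (f g : Hom A B), D (f + g) = D f + D g
  D_smul : ∀ {A B} (r : k) (f : Hom A B), D (r • f) = r • D f
  -- (ii) D f is k-linear in its second argument
  D_arg_add : ∀ {Z A B} (f : Hom A B) (x u v : Hom Z A),
    comp (D f) (pair x (u + v)) = comp (D f) (pair x u) + comp (D f) (pair x v)
  D_arg_smul : ∀ {Z A B} (f : Hom A B) (r : k) (x u : Hom Z A),
    comp (D f) (pair x (r • u)) = r • comp (D f) (pair x u)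
  -- (iii) D of projections
  D_fst : ∀ {A B}, D (fst (A := A) (B := B)) = comp fst snd
  D_snd : ∀ {A B}, D (snd (A := A) (B := B)) = comp snd snd
  -- (iv) D of identities
  D_id : ∀ {A}, D (id A) = snd
  -- (v) the chain rule
  D_comp : ∀ {A B C} (g : Hom B C) (f : Hom A B),
    D (comp g f) = comp (D g) (pair (comp f fst) (D f))
  -- (vi) D f is D-linear in its first argument
  D_lin : ∀ {Z A B} (f : Hom A B) (x r v : Hom Z A),
    comp (D (D f)) (pair (pair x r) (pair 0 v)) = comp (D f) (pair x v)
  -- (vii) symmetry of the second derivative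
  D_sym : ∀ {Z A B} (f : Hom A B) (x r s : Hom Z A),
    comp (D (D f)) (pair (pair x r) (pair s 0)) =
      comp (D (D f)) (pair (pair x s) (pair r 0))

variable {k}

namespace CDC

/-- The `n`-th derivative `f⁽ⁿ⁾ = (D₁)ⁿ f : A × Aⁿ → B`. -/
def fDeriv (C : CDC k) {A B : C.Obj} (f : C.Hom A B) :
    (n : ℕ) → C.Hom (C.toCDCData.dom A n) B
  | 0 => f
  | n + 1 =>
      C.comp (C.D (fDeriv C f n)) (C.pair C.fst (C.toCDCData.zpad n C.snd))

/-- The iterated differential `Dⁿ f : A^(2ⁿ) → B`. -/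
def iterD (C : CDC k) {A B : C.Obj} (f : C.Hom A B) :
    (n : ℕ) → C.Hom (C.toCDCData.twoPow A n) B
  | 0 => f
  | n + 1 => C.D (iterD C f n)

/-- `f^{(I)}` for `I ⊆ [n]` (Definition 13). -/
def fIdx (C : CDC k) {A B : C.Obj} (f : C.Hom A B) (n : ℕ) (I : Finset (Fin n)) :
    C.Hom (C.toCDCData.dom A n) B :=
  C.comp (fDeriv C f I.card)
    (C.toCDCData.tupleD I.card
      (Fin.cases (C.toCDCData.projD n 0)
        fun j => C.toCDCData.projD n (Fin.succ ((I.orderIsoOfFin rfl j : Fin n)))))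

end CDC

/-!
Write `y = ∑ⱼ ιⱼ yⱼ`, where `ιⱼ : A → A × Aⁿ` is the inclusion of slot `j`; additivity of `D f⁽ⁿ⁾`
in its second argument splits the left-hand side into `n + 1` terms. The term `j = 0` is
`f⁽ⁿ⁺¹⁾(x, y₀)` by definition of `f⁽ⁿ⁺¹⁾`. For `j ≥ 1`, `D f⁽ⁿ⁾ (x, ιⱼ v) = f⁽ⁿ⁾ (x[j ↦ v])` is the
`D`-linearity of `f⁽ⁿ⁾` in its `j`-th variable. It is proved by induction on `n`: the chain rule
for the linear map `(x, r) ↦ (x, ι₀ r)` reduces it to linearity of `D f` in its first argument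
(axiom (vi)) for the newest variable, and for the older ones to the derivative of the
induction hypothesis combined with symmetry of the second derivative (axiom (vii)).
-/

-- `dom A (n + 1)` has to unfold to a product for the pairing lemmas to rewrite.
attribute [reducible] CDCData.dom

namespace CDC

variable {k : Type u} [CommSemiring k] (C : CDC k)

section cartesian

variable {Z W A B B' : C.Obj}

lemma comp_pair (f : C.Hom W A) (g : C.Hom W B) (h : C.Hom Z W) :
    C.comp (C.pair f g) h = C.pair (C.comp f h) (C.comp g h) := by
  conv_lhs => rw [← C.pair_unique (C.comp (C.pair f g) h)]
  rw [← C.comp_assoc, ← C.comp_assoc, C.fst_pair, C.snd_pair]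

lemma zero_eq_pair : (0 : C.Hom Z (C.prod A B)) = C.pair 0 0 := by
  have h : (0 : C.Hom Z (C.prod A B)) = (0 : k) • 0 := (zero_smul k _).symm
  conv_lhs => rw [← C.pair_unique 0]
  rw [h, C.fst_comp_smul, C.snd_comp_smul, zero_smul, zero_smul]

lemma pair_add_pair (f f' : C.Hom Z A) (g g' : C.Hom Z B) :
    C.pair f g + C.pair f' g' = C.pair (f + f') (g + g') := by
  conv_lhs => rw [← C.pair_unique (C.pair f g + C.pair f' g')]
  rw [C.fst_comp_add, C.snd_comp_add, C.fst_pair, C.snd_pair, C.fst_pair, C.snd_pair]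

lemma sum_pair {ι : Type*} (s : Finset ι) (f : ι → C.Hom Z A) (g : ι → C.Hom Z B) :
    ∑ i ∈ s, C.pair (f i) (g i) = C.pair (∑ i ∈ s, f i) (∑ i ∈ s, g i) := by
  induction s using Finset.cons_induction with
  | empty => simp only [Finset.sum_empty, zero_eq_pair]
  | cons i s hi ih => rw [Finset.sum_cons, Finset.sum_cons, Finset.sum_cons, ih, pair_add_pair]

lemma D_zero : C.D (0 : C.Hom A B) = 0 := by
  rw [← zero_smul k (0 : C.Hom A B), C.D_smul, zero_smul]

lemma comp_D_pair_zero (f : C.Hom A B) (x : C.Hom Z A) : C.comp (C.D f) (C.pair x 0) = 0 := by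
  rw [← zero_smul k (0 : C.Hom Z A), C.D_arg_smul, zero_smul]

lemma comp_D_pair_sum {ι : Type*} (f : C.Hom A B) (x : C.Hom Z A) (s : Finset ι)
    (u : ι → C.Hom Z A) :
    C.comp (C.D f) (C.pair x (∑ i ∈ s, u i)) = ∑ i ∈ s, C.comp (C.D f) (C.pair x (u i)) := by
  induction s using Finset.cons_induction with
  | empty => rw [Finset.sum_empty, Finset.sum_empty, comp_D_pair_zero]
  | cons i s hi ih => rw [Finset.sum_cons, Finset.sum_cons, C.D_arg_add, ih]

lemma D_pair (f : C.Hom A B) (g : C.Hom A B') :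
    C.D (C.pair f g) = C.pair (C.D f) (C.D g) := by
  have hf := C.D_comp (C.fst (A := B) (B := B')) (C.pair f g)
  have hg := C.D_comp (C.snd (A := B) (B := B')) (C.pair f g)
  rw [C.fst_pair, C.D_fst, C.comp_assoc, C.snd_pair] at hf
  rw [C.snd_pair, C.D_snd, C.comp_assoc, C.snd_pair] at hg
  rw [hf, hg, C.pair_unique]

end cartesian

def IsLinear {A B : C.Obj} (h : C.Hom A B) : Prop :=
  C.D h = C.comp h C.snd

section linear

variable {C} {W A B B' : C.Obj}

lemma isLinear_id : C.IsLinear (C.id A) := by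
  rw [IsLinear, C.D_id, C.id_comp]

lemma isLinear_fst : C.IsLinear (C.fst (A := A) (B := B)) := C.D_fst

lemma isLinear_snd : C.IsLinear (C.snd (A := A) (B := B)) := C.D_snd

lemma isLinear_zero : C.IsLinear (0 : C.Hom A B) := by
  rw [IsLinear, D_zero, C.zero_comp]

lemma IsLinear.pair {f : C.Hom A B} {g : C.Hom A B'} (hf : C.IsLinear f) (hg : C.IsLinear g) :
    C.IsLinear (C.pair f g) := by
  rw [IsLinear, D_pair, hf, hg, comp_pair]

lemma IsLinear.comp {g : C.Hom A B} {f : C.Hom W A} (hg : C.IsLinear g) (hf : C.IsLinear f) :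
    C.IsLinear (C.comp g f) := by
  rw [IsLinear, C.D_comp, hg, hf, C.comp_assoc, C.snd_pair, C.comp_assoc]

lemma D_comp_of_isLinear (g : C.Hom A B) {P : C.Hom W A} (hP : C.IsLinear P) :
    C.D (C.comp g P) = C.comp (C.D g) (C.pair (C.comp P C.fst) (C.comp P C.snd)) := by
  rw [C.D_comp, hP]

end linear

section slots

variable {Z A : C.Obj}

/-- The inclusion `ιⱼ : A → A × Aⁿ` of slot `j`, with `0` in the other slots. -/
def single : (n : ℕ) → Fin (n + 1) → C.Hom A (C.dom A n)
  | 0, _ => C.id A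
  | n + 1, j => Fin.lastCases (C.pair 0 (C.id A)) (fun j => C.pair (single n j) 0) j

/-- `C.update n j : (A × Aⁿ) × A → A × Aⁿ` overwrites slot `j` with the last coordinate. -/
def update : (n : ℕ) → Fin (n + 1) → C.Hom (C.prod (C.dom A n) A) (C.dom A n)
  | 0, _ => C.snd
  | n + 1, j =>
      Fin.lastCases (C.pair (C.comp C.fst C.fst) C.snd)
        (fun j => C.pair (C.comp (update n j) (C.pair (C.comp C.fst C.fst) C.snd))
          (C.comp C.snd C.fst)) j

@[simp] lemma single_last (n : ℕ) :
    C.single (A := A) (n + 1) (Fin.last (n + 1)) = C.pair 0 (C.id A) :=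
  Fin.lastCases_last ..

@[simp] lemma single_castSucc (n : ℕ) (j : Fin (n + 1)) :
    C.single (A := A) (n + 1) j.castSucc = C.pair (C.single n j) 0 :=
  Fin.lastCases_castSucc ..

@[simp] lemma update_last (n : ℕ) :
    C.update (A := A) (n + 1) (Fin.last (n + 1)) = C.pair (C.comp C.fst C.fst) C.snd :=
  Fin.lastCases_last ..

@[simp] lemma update_castSucc (n : ℕ) (j : Fin (n + 1)) :
    C.update (A := A) (n + 1) j.castSucc =
      C.pair (C.comp (C.update n j) (C.pair (C.comp C.fst C.fst) C.snd)) (C.comp C.snd C.fst) :=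
  Fin.lastCases_castSucc ..

lemma isLinear_single (n : ℕ) (j : Fin (n + 1)) : C.IsLinear (C.single (A := A) n j) := by
  induction n with
  | zero => exact isLinear_id
  | succ n ih =>
      induction j using Fin.lastCases with
      | last => rw [single_last]; exact isLinear_zero.pair isLinear_id
      | cast j => rw [single_castSucc]; exact (ih j).pair isLinear_zero

lemma isLinear_update (n : ℕ) (j : Fin (n + 1)) : C.IsLinear (C.update (A := A) n j) := by
  induction n with
  | zero => exact isLinear_snd
  | succ n ih =>
      have h : C.IsLinear
          (C.pair (C.comp C.fst C.fst) C.snd : C.Hom (C.prod (C.dom A (n + 1)) A) _) :=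
        (isLinear_fst.comp isLinear_fst).pair isLinear_snd
      induction j using Fin.lastCases with
      | last => rw [update_last]; exact h
      | cast j =>
          rw [update_castSucc]
          exact ((ih j).comp h).pair (isLinear_snd.comp isLinear_fst)

lemma single_comp_zero (n : ℕ) (j : Fin (n + 1)) :
    C.comp (C.single n j) (0 : C.Hom Z A) = 0 := by
  induction n with
  | zero => exact C.id_comp 0
  | succ n ih =>
      induction j using Fin.lastCases with
      | last => rw [single_last, comp_pair, C.zero_comp, C.id_comp, ← zero_eq_pair]
      | cast j => rw [single_castSucc, comp_pair, C.zero_comp, ih, ← zero_eq_pair]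

lemma single_zero_comp (n : ℕ) (v : C.Hom Z A) : C.comp (C.single n 0) v = C.zpad n v := by
  induction n with
  | zero => exact C.id_comp v
  | succ n ih =>
      rw [← Fin.castSucc_zero, single_castSucc, comp_pair, C.zero_comp, ih]
      rfl

lemma update_succ_comp_pair_single_zero (n : ℕ) (j : Fin n) (v : C.Hom Z A) :
    C.comp (C.update n j.succ) (C.pair (C.comp (C.single n 0) v) 0) =
      C.comp (C.single n 0) v := by
  induction n with
  | zero => exact j.elim0
  | succ n ih =>
      rw [← Fin.castSucc_zero, single_castSucc]
      induction j using Fin.lastCases with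
      | last =>
          rw [Fin.succ_last, update_last]
          simp only [comp_pair, C.comp_assoc, C.fst_pair, C.snd_pair, C.zero_comp]
      | cast j =>
          rw [Fin.succ_castSucc, update_castSucc]
          simp only [comp_pair, C.comp_assoc, C.fst_pair, C.snd_pair, C.zero_comp, ih]

lemma tupleD_succ (n : ℕ) (x : Fin (n + 2) → C.Hom Z A) :
    C.tupleD (n + 1) x = C.pair (C.tupleD n (Fin.init x)) (x (Fin.last (n + 1))) :=
  rfl

lemma tupleD_snoc (n : ℕ) (x : Fin (n + 1) → C.Hom Z A) (v : C.Hom Z A) :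
    C.tupleD (n + 1) (Fin.snoc x v) = C.pair (C.tupleD n x) v := by
  rw [tupleD_succ, Fin.init_snoc, Fin.snoc_last]

lemma update_comp_pair_tupleD (n : ℕ) (j : Fin (n + 1)) (x : Fin (n + 1) → C.Hom Z A)
    (v : C.Hom Z A) :
    C.comp (C.update n j) (C.pair (C.tupleD n x) v) = C.tupleD n (Function.update x j v) := by
  induction n with
  | zero =>
      rw [Fin.fin_one_eq_zero j]
      exact (C.snd_pair _ _).trans (Function.update_self (0 : Fin 1) v x).symm
  | succ n ih =>
      induction j using Fin.lastCases with
      | last =>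
          rw [update_last, tupleD_succ, tupleD_succ, Fin.init_update_last, Function.update_self]
          simp only [comp_pair, C.comp_assoc, C.fst_pair, C.snd_pair]
      | cast j =>
          rw [update_castSucc, tupleD_succ, tupleD_succ, Fin.init_update_castSucc,
            Function.update_of_ne (Fin.castSucc_lt_last j).ne']
          simp only [comp_pair, C.comp_assoc, C.fst_pair, C.snd_pair, ih]

lemma isLinear_pair_fst_single (n : ℕ) (j : Fin (n + 1)) :
    C.IsLinear (C.pair C.fst (C.comp (C.single n j) C.snd) :
      C.Hom (C.dom A (n + 1)) (C.prod (C.dom A n) (C.dom A n))) :=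
  isLinear_fst.pair ((C.isLinear_single n j).comp isLinear_snd)

lemma tupleD_eq_sum_single (n : ℕ) (y : Fin (n + 1) → C.Hom Z A) :
    C.tupleD n y = ∑ j, C.comp (C.single n j) (y j) := by
  induction n with
  | zero =>
      rw [Fin.sum_univ_succ, Finset.univ_eq_empty, Finset.sum_empty, add_zero]
      exact (C.id_comp _).symm
  | succ n ih =>
      rw [Fin.sum_univ_castSucc, tupleD_succ, ih]
      simp only [single_castSucc, single_last, comp_pair, C.zero_comp, C.id_comp, sum_pair,
        Finset.sum_const_zero, pair_add_pair, add_zero, zero_add]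
      rfl

end slots

section derivatives

variable {A B : C.Obj}

lemma fDeriv_succ_eq (f : C.Hom A B) (n : ℕ) :
    C.fDeriv f (n + 1) =
      C.comp (C.D (C.fDeriv f n)) (C.pair C.fst (C.comp (C.single n 0) C.snd)) := by
  rw [single_zero_comp]
  rfl

/-- `f⁽ⁿ⁾` is `D`-linear in each of its last `n` arguments. -/
lemma D_fDeriv_pair_single_succ (f : C.Hom A B) (n : ℕ) (j : Fin n) :
    C.comp (C.D (C.fDeriv f n)) (C.pair C.fst (C.comp (C.single n j.succ) C.snd)) =
      C.comp (C.fDeriv f n) (C.update n j.succ) := by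
  induction n with
  | zero => exact j.elim0
  | succ n ih =>
      rw [fDeriv_succ_eq, D_comp_of_isLinear _ (C.isLinear_pair_fst_single n 0)]
      induction j using Fin.lastCases with
      | last =>
          rw [Fin.succ_last]
          simp only [single_last, update_last, comp_pair, C.comp_assoc, C.fst_pair, C.snd_pair,
            C.zero_comp, C.id_comp]
          rw [C.D_lin]
      | cast j =>
          rw [Fin.succ_castSucc]
          simp only [single_castSucc, update_castSucc, comp_pair, C.comp_assoc, C.fst_pair,
            C.snd_pair, C.zero_comp, single_comp_zero]
          rw [C.D_sym]
          -- differentiate the induction hypothesis and evaluate it at `((x, v), (ι₀ r, 0))`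
          have hD := congrArg C.D (ih j)
          rw [D_comp_of_isLinear _ (C.isLinear_pair_fst_single n j.succ),
            D_comp_of_isLinear _ (C.isLinear_update n j.succ)] at hD
          have h := congrArg (fun h => C.comp h
            (C.pair (C.pair (C.comp C.fst C.fst) C.snd)
              (C.pair (C.comp (C.single n 0) (C.comp C.snd C.fst)) 0) :
                C.Hom (C.dom A (n + 2)) (C.prod (C.dom A (n + 1)) (C.dom A (n + 1))))) hD
          simp only [comp_pair, C.comp_assoc, C.fst_pair, C.snd_pair, single_comp_zero,
            update_succ_comp_pair_single_zero] at h
          exact h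

variable {Z : C.Obj}

lemma comp_fDeriv_succ_pair (f : C.Hom A B) (n : ℕ) (x : C.Hom Z (C.dom A n)) (v : C.Hom Z A) :
    C.comp (C.fDeriv f (n + 1)) (C.pair x v) =
      C.comp (C.D (C.fDeriv f n)) (C.pair x (C.comp (C.single n 0) v)) := by
  simp only [fDeriv_succ_eq, C.comp_assoc, comp_pair, C.fst_pair, C.snd_pair]

lemma comp_D_fDeriv_pair_single_succ (f : C.Hom A B) (n : ℕ) (j : Fin n)
    (x : C.Hom Z (C.dom A n)) (v : C.Hom Z A) :
    C.comp (C.D (C.fDeriv f n)) (C.pair x (C.comp (C.single n j.succ) v)) =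
      C.comp (C.fDeriv f n) (C.comp (C.update n j.succ) (C.pair x v)) := by
  have h := congrArg (C.comp · (C.pair x v)) (C.D_fDeriv_pair_single_succ f n j)
  simpa only [C.comp_assoc, comp_pair, C.fst_pair, C.snd_pair] using h

end derivatives

end CDC

theorem statement4 {k : Type u} [CommSemiring k] (C : CDC k)
    {A B : C.Obj} (f : C.Hom A B) (n : ℕ) (X : C.Obj)
    (x y : Fin (n + 1) → C.Hom X A) :
    C.comp (C.D (C.fDeriv f n))
        (C.pair (C.toCDCData.tupleD n x) (C.toCDCData.tupleD n y)) =
      C.comp (C.fDeriv f (n + 1)) (C.toCDCData.tupleD (n + 1) (Fin.snoc x (y 0)))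
        + ∑ i : Fin n,
            C.comp (C.fDeriv f n)
              (C.toCDCData.tupleD n (Function.update x i.succ (y i.succ))) := by
  rw [C.tupleD_eq_sum_single n y, C.comp_D_pair_sum, Fin.sum_univ_succ, C.tupleD_snoc,
    C.comp_fDeriv_succ_pair]
  congr 1
  refine Finset.sum_congr rfl fun i _ => ?_
  rw [C.comp_D_fDeriv_pair_single_succ, C.update_comp_pair_tupleD]
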